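/- arXiv:2207.06712 — 3 statements merged into one kernel-verified Lean document; each statement's English description precedes it below -/
import Mathlib

section
/- For all α ≥ 1, U(L_α) = L_{α+1} as formal power series in q; that is, U_4(𝒜 · L_α) = L_{α+1}. -/
open PowerSeries

noncomputable section

/-- `(q^a; q^b)_∞ = ∏_{m=0}^∞ (1 - q^{a+bm})` as a formal power series over ℤ
(for `a ≥ 1`, the coefficient of `q^n` is already determined by the factors with `m ≤ n`). -/
def qPoch (a b : ℕ) : PowerSeries ℤ :=
  PowerSeries.mk fun n =>
    PowerSeries.coeff n
      (∏ m ∈ Finset.range (n + 1), (1 - (PowerSeries.X : PowerSeries ℤ) ^ (a + b * m)))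

/-- Generating function of `d_7`: `∏_{m≥1} (1-q^{2m})^7 / (1-q^m)^{22}`. -/
def d7GF : PowerSeries ℤ := (qPoch 2 2) ^ 7 * Ring.inverse ((qPoch 1 1) ^ 22)

/-- The 7-elongated plane partition diamond counting function. -/
def d7 (n : ℕ) : ℤ := PowerSeries.coeff n d7GF

/-- `λ_α = (2·4^α + 1)/3`, the least positive solution of `3y ≡ 1 (mod 4^α)`. -/
def lam (α : ℕ) : ℕ := (2 * 4 ^ α + 1) / 3

/-- `L_α = ((q;q)_∞^26 (q^4;q^4)_∞^2 / (q^2;q^2)_∞^13) · Σ_{n≥0} d_7(4^α n + λ_α) q^{n+1}`. -/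
def Lser (α : ℕ) : PowerSeries ℤ :=
  (qPoch 1 1) ^ 26 * (qPoch 4 4) ^ 2 * Ring.inverse ((qPoch 2 2) ^ 13) *
    (PowerSeries.X * PowerSeries.mk fun n => d7 (4 ^ α * n + lam α))

/-- The Hauptmodul `x = q (q^2;q^2)_∞^2 (q^8;q^8)_∞^4 / ((q;q)_∞^4 (q^4;q^4)_∞^2)`. -/
def xser : PowerSeries ℤ :=
  PowerSeries.X * (qPoch 2 2) ^ 2 * (qPoch 8 8) ^ 4 *
    Ring.inverse ((qPoch 1 1) ^ 4 * (qPoch 4 4) ^ 2)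

/-- `𝒜 = q (q^2;q^2)_∞^13 (q^4;q^4)_∞^24 (q^16;q^16)_∞^2 / ((q;q)_∞^26 (q^8;q^8)_∞^13)`. -/
def Aser : PowerSeries ℤ :=
  PowerSeries.X * (qPoch 2 2) ^ 13 * (qPoch 4 4) ^ 24 * (qPoch 16 16) ^ 2 *
    Ring.inverse ((qPoch 1 1) ^ 26 * (qPoch 8 8) ^ 13)

/-- `U_4(Σ a(n) qⁿ) = Σ a(4n) qⁿ`. -/
def U4 (f : PowerSeries ℤ) : PowerSeries ℤ :=
  PowerSeries.mk fun n => PowerSeries.coeff (4 * n) f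

/-- `U(f) = U_4(𝒜 · f)`. -/
def Uop (f : PowerSeries ℤ) : PowerSeries ℤ := U4 (Aser * f)

/-- `θ(n) = ⌊(8n-5)/4⌋` (natural-number floor division; for `n ≥ 1` this is the floor). -/
def theta (n : ℕ) : ℕ := (8 * n - 5) / 4

open Finset in
section
namespace PPDaux

/-- substitution `q ↦ q^4` -/
def sub4 (f : PowerSeries ℤ) : PowerSeries ℤ :=
  PowerSeries.mk fun n => if 4 ∣ n then PowerSeries.coeff (n / 4) f else 0

lemma coeff_sub4 (f : PowerSeries ℤ) (n : ℕ) :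
    PowerSeries.coeff n (sub4 f) =
      if 4 ∣ n then PowerSeries.coeff (n / 4) f else 0 := by
  simp [sub4]

lemma coeff_sub4_mul (f g : PowerSeries ℤ) (n : ℕ) :
    PowerSeries.coeff (4 * n) (sub4 f * g) =
      ∑ p ∈ Finset.HasAntidiagonal.antidiagonal n,
        PowerSeries.coeff p.1 f * PowerSeries.coeff (4 * p.2) g := by
  rw [PowerSeries.coeff_mul]
  have himg : ((Finset.HasAntidiagonal.antidiagonal n).image fun p : ℕ × ℕ => (4 * p.1, 4 * p.2))
      ⊆ Finset.HasAntidiagonal.antidiagonal (4 * n) := by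
    intro p hp
    simp only [Finset.mem_image, Finset.HasAntidiagonal.mem_antidiagonal] at hp ⊢
    obtain ⟨q, hq, rfl⟩ := hp
    omega
  rw [← Finset.sum_subset himg ?_]
  · rw [Finset.sum_image ?_]
    · apply Finset.sum_congr rfl
      intro p _
      rw [coeff_sub4, if_pos ⟨p.1, rfl⟩, Nat.mul_div_cancel_left _ (by norm_num)]
    · intro p _ q _ h
      simp only [Prod.mk.injEq] at h
      exact Prod.ext (by omega) (by omega)
  · intro p hp hnp
    rw [coeff_sub4, if_neg, zero_mul]
    intro hdvd
    apply hnp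
    simp only [Finset.mem_image, Finset.HasAntidiagonal.mem_antidiagonal] at hp ⊢
    obtain ⟨a, ha⟩ := hdvd
    exact ⟨(a, n - a), by omega, Prod.ext (by omega) (by omega)⟩

lemma sub4_one : sub4 1 = 1 := by
  ext n
  rw [coeff_sub4]
  simp only [PowerSeries.coeff_one]
  split_ifs <;> omega

lemma sub4_mul (f g : PowerSeries ℤ) : sub4 (f * g) = sub4 f * sub4 g := by
  ext n
  by_cases h : 4 ∣ n
  · obtain ⟨k, rfl⟩ := h
    rw [coeff_sub4, if_pos ⟨k, rfl⟩, Nat.mul_div_cancel_left _ (by norm_num),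
      coeff_sub4_mul, PowerSeries.coeff_mul]
    apply Finset.sum_congr rfl
    intro p _
    rw [coeff_sub4, if_pos ⟨p.2, rfl⟩, Nat.mul_div_cancel_left _ (by norm_num)]
  · rw [coeff_sub4, if_neg h, PowerSeries.coeff_mul]
    refine (Finset.sum_eq_zero ?_).symm
    intro p hp
    rw [Finset.HasAntidiagonal.mem_antidiagonal] at hp
    by_cases h1 : 4 ∣ p.1
    · rw [coeff_sub4 g, if_neg (by omega), mul_zero]
    · rw [coeff_sub4 f, if_neg h1, zero_mul]

def sub4Hom : PowerSeries ℤ →+* PowerSeries ℤ where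
  toFun := sub4
  map_one' := sub4_one
  map_mul' := sub4_mul
  map_zero' := by ext n; simp [coeff_sub4]
  map_add' := fun f g => by
    ext n
    simp only [coeff_sub4, map_add]
    split_ifs <;> simp

lemma sub4_pow (f : PowerSeries ℤ) (k : ℕ) : sub4 (f ^ k) = sub4 f ^ k :=
  map_pow sub4Hom f k

lemma sub4_one_sub_X_pow (e : ℕ) :
    sub4 (1 - (PowerSeries.X : PowerSeries ℤ) ^ e) = 1 - PowerSeries.X ^ (4 * e) := by
  ext n
  rw [coeff_sub4]
  simp only [map_sub, PowerSeries.coeff_one, PowerSeries.coeff_X_pow]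
  split_ifs <;> omega

lemma coeff_prod_stable (a b : ℕ) (hb : 1 ≤ b) (n N : ℕ) (h : n ≤ N) :
    PowerSeries.coeff n
        (∏ m ∈ Finset.range (N + 1), (1 - (PowerSeries.X : PowerSeries ℤ) ^ (a + b * m))) =
      PowerSeries.coeff n
        (∏ m ∈ Finset.range (n + 1), (1 - (PowerSeries.X : PowerSeries ℤ) ^ (a + b * m))) := by
  induction N with
  | zero =>
    have : n = 0 := by omega
    subst this; rfl
  | succ N ih =>
    rcases Nat.lt_or_ge n (N + 1) with hn | hn
    · rw [Finset.prod_range_succ, mul_sub, mul_one, map_sub,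
        PowerSeries.coeff_mul_X_pow', if_neg, sub_zero]
      · exact ih (by omega)
      · have := Nat.le_mul_of_pos_left (N + 1) hb
        omega
    · have : n = N + 1 := by omega
      subst this; rfl

lemma sub4_qPoch (a b : ℕ) (hb : 1 ≤ b) : sub4 (qPoch a b) = qPoch (4 * a) (4 * b) := by
  have hmap : ∀ K : ℕ,
      sub4 (∏ m ∈ Finset.range K, (1 - (PowerSeries.X : PowerSeries ℤ) ^ (a + b * m))) =
        ∏ m ∈ Finset.range K, (1 - (PowerSeries.X : PowerSeries ℤ) ^ (4 * a + 4 * b * m)) := by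
    intro K
    rw [show sub4 (∏ m ∈ Finset.range K, (1 - (PowerSeries.X : PowerSeries ℤ) ^ (a + b * m)))
        = sub4Hom (∏ m ∈ Finset.range K, (1 - (PowerSeries.X : PowerSeries ℤ) ^ (a + b * m)))
        from rfl, map_prod]
    apply Finset.prod_congr rfl
    intro m _
    show sub4 _ = _
    rw [sub4_one_sub_X_pow, show 4 * (a + b * m) = 4 * a + 4 * b * m by ring]
  ext n
  rw [coeff_sub4]
  by_cases h : 4 ∣ n
  · obtain ⟨k, rfl⟩ := h
    rw [if_pos ⟨k, rfl⟩, Nat.mul_div_cancel_left _ (by norm_num), qPoch, qPoch,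
      PowerSeries.coeff_mk, PowerSeries.coeff_mk, ← hmap, coeff_sub4,
      if_pos ⟨k, rfl⟩, Nat.mul_div_cancel_left _ (by norm_num)]
    exact (coeff_prod_stable a b hb k (4 * k) (by omega)).symm
  · rw [if_neg h, qPoch, PowerSeries.coeff_mk, ← hmap, coeff_sub4, if_neg h]

lemma constCoeff_qPoch (a b : ℕ) (ha : 1 ≤ a) :
    PowerSeries.constantCoeff (qPoch a b) = 1 := by
  rw [← PowerSeries.coeff_zero_eq_constantCoeff, qPoch, PowerSeries.coeff_mk,
    Finset.prod_range_one]
  simp only [map_sub, PowerSeries.coeff_one, PowerSeries.coeff_X_pow]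
  split_ifs <;> omega

lemma isUnit_qPoch (a b : ℕ) (ha : 1 ≤ a) : IsUnit (qPoch a b) := by
  rw [PowerSeries.isUnit_iff_constantCoeff, constCoeff_qPoch a b ha]
  exact isUnit_one

lemma sub4_inverse (f : PowerSeries ℤ) (hf : IsUnit f) :
    sub4 (Ring.inverse f) = Ring.inverse (sub4 f) := by
  have h1 : sub4 f * sub4 (Ring.inverse f) = 1 := by
    rw [← sub4_mul, Ring.mul_inverse_cancel _ hf, sub4_one]
  have hu : IsUnit (sub4 f) := hf.map sub4Hom
  calc sub4 (Ring.inverse f)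
      = (Ring.inverse (sub4 f) * sub4 f) * sub4 (Ring.inverse f) := by
        rw [Ring.inverse_mul_cancel _ hu, one_mul]
    _ = Ring.inverse (sub4 f) * (sub4 f * sub4 (Ring.inverse f)) := by ring
    _ = Ring.inverse (sub4 f) := by rw [h1, mul_one]

lemma three_lam (α : ℕ) : 3 * lam α = 2 * 4 ^ α + 1 := by
  have h : 3 ∣ 2 * 4 ^ α + 1 := by
    induction α with
    | zero => decide
    | succ k ih =>
      have : 2 * 4 ^ (k + 1) + 1 = (2 * 4 ^ k + 1) + 3 * (2 * 4 ^ k) := by ring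
      rw [this]
      exact dvd_add ih ⟨2 * 4 ^ k, rfl⟩
  rw [lam, Nat.mul_div_cancel' h]

lemma U4_sub4_mul (f g : PowerSeries ℤ) : U4 (sub4 f * g) = f * U4 g := by
  ext n
  rw [U4, PowerSeries.coeff_mk, coeff_sub4_mul, PowerSeries.coeff_mul]
  exact Finset.sum_congr rfl fun p _ => by rw [U4, PowerSeries.coeff_mk]

lemma U4_X2 (α : ℕ) :
    U4 (PowerSeries.X ^ 2 * PowerSeries.mk fun n => d7 (4 ^ α * n + lam α)) =
      PowerSeries.X * PowerSeries.mk fun n => d7 (4 ^ (α + 1) * n + lam (α + 1)) := by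
  ext n
  rw [U4, PowerSeries.coeff_mk, mul_comm (PowerSeries.X ^ 2), PowerSeries.coeff_mul_X_pow']
  cases n with
  | zero =>
    rw [if_neg (by omega)]
    simp [PowerSeries.coeff_mul]
  | succ m =>
    rw [if_pos (by omega), PowerSeries.coeff_succ_X_mul, PowerSeries.coeff_mk,
      PowerSeries.coeff_mk]
    congr 1
    have h1 := three_lam α
    have h2 := three_lam (α + 1)
    have h4 : (4 : ℕ) ^ (α + 1) = 4 * 4 ^ α := by rw [pow_succ]; ring
    have h5 : 4 * (m + 1) - 2 = 4 * m + 2 := by omega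
    rw [h5, show 4 ^ α * (4 * m + 2) = 4 ^ (α + 1) * m + 2 * 4 ^ α by rw [h4]; ring]
    omega

lemma AE :
    Aser * (qPoch 1 1 ^ 26 * qPoch 4 4 ^ 2 * Ring.inverse (qPoch 2 2 ^ 13)) =
      PowerSeries.X *
        (qPoch 4 4 ^ 26 * qPoch 16 16 ^ 2 * Ring.inverse (qPoch 8 8 ^ 13)) := by
  have hu1 : IsUnit ((qPoch 1 1) ^ 26) := (isUnit_qPoch 1 1 le_rfl).pow 26
  have hu2 : IsUnit ((qPoch 2 2) ^ 13) := (isUnit_qPoch 2 2 (by norm_num)).pow 13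
  have hu8 : IsUnit ((qPoch 8 8) ^ 13) := (isUnit_qPoch 8 8 (by norm_num)).pow 13
  set P := qPoch 1 1 ^ 26 * qPoch 8 8 ^ 13 with hP
  have huP : IsUnit P := hu1.mul hu8
  have hMne : (P * (qPoch 2 2 ^ 13) * (qPoch 8 8 ^ 13)) ≠ 0 :=
    ((huP.mul hu2).mul hu8).ne_zero
  apply mul_right_cancel₀ hMne
  rw [Aser]
  have c1 : P * Ring.inverse P = 1 := Ring.mul_inverse_cancel _ huP
  have c2 : (qPoch 2 2 ^ 13) * Ring.inverse (qPoch 2 2 ^ 13) = 1 :=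
    Ring.mul_inverse_cancel _ hu2
  have c3 : (qPoch 8 8 ^ 13) * Ring.inverse (qPoch 8 8 ^ 13) = 1 :=
    Ring.mul_inverse_cancel _ hu8
  have hR : PowerSeries.X *
        (qPoch 4 4 ^ 26 * qPoch 16 16 ^ 2 * Ring.inverse (qPoch 8 8 ^ 13)) *
        (P * qPoch 2 2 ^ 13 * qPoch 8 8 ^ 13)
      = PowerSeries.X * qPoch 4 4 ^ 26 * qPoch 16 16 ^ 2 * P * qPoch 2 2 ^ 13 := by
    calc PowerSeries.X *
          (qPoch 4 4 ^ 26 * qPoch 16 16 ^ 2 * Ring.inverse (qPoch 8 8 ^ 13)) *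
          (P * qPoch 2 2 ^ 13 * qPoch 8 8 ^ 13)
        = (PowerSeries.X * qPoch 4 4 ^ 26 * qPoch 16 16 ^ 2 * P * qPoch 2 2 ^ 13) *
            (qPoch 8 8 ^ 13 * Ring.inverse (qPoch 8 8 ^ 13)) := by ring
      _ = PowerSeries.X * qPoch 4 4 ^ 26 * qPoch 16 16 ^ 2 * P * qPoch 2 2 ^ 13 := by
          rw [c3, mul_one]
  rw [hR]
  calc PowerSeries.X * qPoch 2 2 ^ 13 * qPoch 4 4 ^ 24 * qPoch 16 16 ^ 2 *
        Ring.inverse P * (qPoch 1 1 ^ 26 * qPoch 4 4 ^ 2 * Ring.inverse (qPoch 2 2 ^ 13)) *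
        (P * qPoch 2 2 ^ 13 * qPoch 8 8 ^ 13)
      = (PowerSeries.X * qPoch 2 2 ^ 13 * qPoch 4 4 ^ 24 * qPoch 16 16 ^ 2 *
          qPoch 1 1 ^ 26 * qPoch 4 4 ^ 2 * qPoch 8 8 ^ 13) *
          (P * Ring.inverse P) * (qPoch 2 2 ^ 13 * Ring.inverse (qPoch 2 2 ^ 13)) := by ring
    _ = PowerSeries.X * qPoch 2 2 ^ 13 * qPoch 4 4 ^ 24 * qPoch 16 16 ^ 2 *
          qPoch 1 1 ^ 26 * qPoch 4 4 ^ 2 * qPoch 8 8 ^ 13 := by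
        rw [c1, c2, mul_one, mul_one]
    _ = PowerSeries.X * qPoch 4 4 ^ 26 * qPoch 16 16 ^ 2 * P * qPoch 2 2 ^ 13 := by
        rw [hP]; ring

lemma sub4_E :
    sub4 (qPoch 1 1 ^ 26 * qPoch 4 4 ^ 2 * Ring.inverse (qPoch 2 2 ^ 13)) =
      qPoch 4 4 ^ 26 * qPoch 16 16 ^ 2 * Ring.inverse (qPoch 8 8 ^ 13) := by
  have hu2 : IsUnit ((qPoch 2 2) ^ 13) := (isUnit_qPoch 2 2 (by norm_num)).pow 13
  rw [sub4_mul, sub4_mul, sub4_pow, sub4_pow, sub4_inverse _ hu2, sub4_pow,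
    sub4_qPoch 1 1 le_rfl, sub4_qPoch 4 4 (by norm_num), sub4_qPoch 2 2 (by norm_num)]

end PPDaux
end

open PPDaux

/-- For all `α ≥ 1`, `U(L_α) = L_{α+1}`, i.e. `U_4(𝒜 · L_α) = L_{α+1}`. -/
theorem stmt4 (α : ℕ) (hα : 1 ≤ α) : Uop (Lser α) = Lser (α + 1) := by
  have key : Aser * Lser α =
      sub4 (qPoch 1 1 ^ 26 * qPoch 4 4 ^ 2 * Ring.inverse (qPoch 2 2 ^ 13)) *
        (PowerSeries.X ^ 2 * PowerSeries.mk fun n => d7 (4 ^ α * n + lam α)) := by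
    rw [Lser, sub4_E, show
      Aser * (qPoch 1 1 ^ 26 * qPoch 4 4 ^ 2 * Ring.inverse (qPoch 2 2 ^ 13) *
        (PowerSeries.X * PowerSeries.mk fun n => d7 (4 ^ α * n + lam α)))
      = (Aser * (qPoch 1 1 ^ 26 * qPoch 4 4 ^ 2 * Ring.inverse (qPoch 2 2 ^ 13))) *
        (PowerSeries.X * PowerSeries.mk fun n => d7 (4 ^ α * n + lam α)) by ring, AE]
    ring
  rw [Uop, key, U4_sub4_mul, U4_X2, Lser]
end
end

section
/- Let n ≥ 4, 0 ≤ j ≤ 3, 1 ≤ k ≤ 4 be integers and let r be an integer with r − k ≥ ⌈(n+j−3)/4⌉. Then ⌊(4(r−k) − (n+j−4) − 1)/2⌋ + φ(j,k) ≥ ⌊(4r − n − 1)/2⌋, where φ(j,k) is defined by φ(0,1)=0, φ(0,2)=2, φ(0,3)=7, φ(0,4)=8, and φ(j,k)=⌊(4k+2j+1)/2⌋ for 1 ≤ j ≤ 3. -/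
/-- `φ(j,k)`: `φ(0,1)=0`, `φ(0,2)=2`, `φ(0,3)=7`, `φ(0,4)=8`, and
`φ(j,k) = ⌊(4k+2j+1)/2⌋` for `1 ≤ j ≤ 3`. -/
def phi (j k : ℤ) : ℤ :=
  if j = 0 then
    (if k = 1 then 0 else if k = 2 then 2 else if k = 3 then 7 else 8)
  else ⌊(4 * (k : ℚ) + 2 * (j : ℚ) + 1) / 2⌋

/-!
Both floors have the form `⌊a/2⌋` with `a` an integer, and the two numerators differ by
`4(k-1) + j`. Halving, the right side exceeds the first floor by at most `2(k-1) + ⌈j/2⌉`,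
so it suffices that `φ(j,k)` dominates this: for `j ≠ 0` it equals `2k + j`, and for `j = 0`
the four tabulated values are at least `2k - 2`.
-/

lemma phi_of_ne_zero {j : ℤ} (hj : j ≠ 0) (k : ℤ) : phi j k = 2 * k + j := by
  rw [phi, if_neg hj, Int.floor_eq_iff]
  push_cast
  constructor <;> linarith

lemma two_mul_sub_two_le_phi_zero {k : ℤ} (hk : k ≤ 4) : 2 * k - 2 ≤ phi 0 k := by
  unfold phi
  split_ifs <;> omega

lemma floor_intCast_div_two (a : ℤ) : ⌊(a : ℚ) / 2⌋ = a / 2 :=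
  mod_cast Rat.floor_intCast_div_natCast a 2

theorem stmt9_general (n j k r : ℤ) (hj0 : 0 ≤ j) (hk4 : k ≤ 4) :
    ⌊(4 * ((r : ℚ) - (k : ℚ)) - ((n : ℚ) + (j : ℚ) - 4) - 1) / 2⌋ + phi j k ≥
      ⌊(4 * (r : ℚ) - (n : ℚ) - 1) / 2⌋ := by
  have hleft : (4 * ((r : ℚ) - k) - ((n : ℚ) + j - 4) - 1) / 2
      = ((4 * (r - k) - (n + j - 4) - 1 : ℤ) : ℚ) / 2 := by push_cast; ring
  have hright : (4 * (r : ℚ) - n - 1) / 2 = ((4 * r - n - 1 : ℤ) : ℚ) / 2 := by push_cast; ring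
  rw [hleft, hright, floor_intCast_div_two, floor_intCast_div_two]
  rcases eq_or_ne j 0 with rfl | hj
  · have := two_mul_sub_two_le_phi_zero hk4
    omega
  · rw [phi_of_ne_zero hj]
    omega

/-- The key arithmetic estimate: for integers `n ≥ 4`, `0 ≤ j ≤ 3`, `1 ≤ k ≤ 4` and
`r` with `r - k ≥ ⌈(n+j-3)/4⌉`, one has
`⌊(4(r-k) - (n+j-4) - 1)/2⌋ + φ(j,k) ≥ ⌊(4r-n-1)/2⌋`. -/
theorem stmt9 (n j k r : ℤ) (hn : 4 ≤ n) (hj0 : 0 ≤ j) (hj3 : j ≤ 3)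
    (hk1 : 1 ≤ k) (hk4 : k ≤ 4)
    (hr : ⌈((n : ℚ) + (j : ℚ) - 3) / 4⌉ ≤ r - k) :
    ⌊(4 * ((r : ℚ) - (k : ℚ)) - ((n : ℚ) + (j : ℚ) - 4) - 1) / 2⌋ + phi j k ≥
      ⌊(4 * (r : ℚ) - (n : ℚ) - 1) / 2⌋ :=
  stmt9_general n j k r hj0 hk4
end

section
/- Let n ≥ 1 and r ≥ ⌈(n+1)/4⌉ be integers. Then π(n,r) + θ(n) ≥ θ(r) + 3, where θ(m) := ⌊(8m−5)/4⌋, π(1,r) := ⌊(8r−5)/4⌋ + 3, π(2,r) := ⌊(8r−5)/4⌋ + 1, and π(n,r) := ⌊(4r−n−1)/2⌋ for n ≥ 3. -/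
/-- `θ(m) = ⌊(8m-5)/4⌋`. -/
def thetaZ (m : ℤ) : ℤ := ⌊(8 * (m : ℚ) - 5) / 4⌋

/-- `π(1,r) = ⌊(8r-5)/4⌋ + 3`, `π(2,r) = ⌊(8r-5)/4⌋ + 1`, and
`π(n,r) = ⌊(4r-n-1)/2⌋` for `n ≥ 3`. -/
def piZ (n r : ℤ) : ℤ :=
  if n = 1 then ⌊(8 * (r : ℚ) - 5) / 4⌋ + 3
  else if n = 2 then ⌊(8 * (r : ℚ) - 5) / 4⌋ + 1
  else ⌊(4 * (r : ℚ) - (n : ℚ) - 1) / 2⌋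

/-! Since `(8m - 5)/4 = 2m - 5/4`, `θ(m) = 2m - 2` exactly, so `π(n,r) + θ(n) - θ(r) - 3` equals `0`
for `n = 1, 2` and `⌊(3n - 7)/2⌋ ≥ 0` for `n ≥ 3`. -/

theorem thetaZ_eq (m : ℤ) : thetaZ m = 2 * m - 2 := by
  rw [thetaZ, Int.floor_eq_iff]
  push_cast
  constructor <;> linarith

theorem piZ_one (r : ℤ) : piZ 1 r = 2 * r + 1 := by
  rw [piZ, if_pos rfl, ← thetaZ, thetaZ_eq]
  ring

theorem piZ_two (r : ℤ) : piZ 2 r = 2 * r - 1 := by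
  rw [piZ, if_neg (by decide), if_pos rfl, ← thetaZ, thetaZ_eq]
  ring

theorem piZ_of_three_le {n : ℤ} (hn : 3 ≤ n) (r : ℤ) : piZ n r = (4 * r - n - 1) / 2 := by
  rw [piZ, if_neg (by omega), if_neg (by omega)]
  exact_mod_cast Rat.floor_intCast_div_natCast (4 * r - n - 1) 2

theorem stmt10_general (n r : ℤ) (hn : 1 ≤ n) :
    piZ n r + thetaZ n ≥ thetaZ r + 3 := by
  rw [thetaZ_eq, thetaZ_eq]
  obtain rfl | rfl | hn3 : n = 1 ∨ n = 2 ∨ 3 ≤ n := by omega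
  · rw [piZ_one]; omega
  · rw [piZ_two]; omega
  · rw [piZ_of_three_le hn3]; omega

/-- The key arithmetic estimate: for integers `n ≥ 1` and `r ≥ ⌈(n+1)/4⌉`,
`π(n,r) + θ(n) ≥ θ(r) + 3`. -/
theorem stmt10 (n r : ℤ) (hn : 1 ≤ n) (hr : ⌈((n : ℚ) + 1) / 4⌉ ≤ r) :
    piZ n r + thetaZ n ≥ thetaZ r + 3 :=
  stmt10_general n r hn
end
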